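/- arXiv:2109.03058 — 3 statements merged into one kernel-verified Lean document; each statement's English description precedes it below -/
import Mathlib

section
/- Let N_n, N_f be positive integers and Ω_n, Ω_f > 0, and set Ω = Ω_n Ω_f / (Ω_n + Ω_f). Let g_n and g_f be independent random variables with g_n Gamma-distributed with shape N_n and scale Ω_n, and g_f Gamma-distributed with shape N_f and scale Ω_f. Then g_s = max{g_n, g_f} has law with probability density (with respect to Lebesgue measure on (0,∞)) given for x > 0 by f_{g_s}(x) = x^{N_n-1} e^{-x/Ω_n} / ((N_n-1)! Ω_n^{N_n}) + x^{N_f-1} e^{-x/Ω_f} / ((N_f-1)! Ω_f^{N_f}) − e^{-x/Ω} ∑_{l=0}^{N_f-1} x^{N_n+l-1} / ((N_n-1)! Ω_n^{N_n} Ω_f^l l!) − e^{-x/Ω} ∑_{ℓ=0}^{N_n-1} x^{N_f+ℓ-1} / ((N_f-1)! Ω_f^{N_f} Ω_n^ℓ ℓ!). -/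
open Real MeasureTheory ProbabilityTheory

noncomputable def mgS (N : ℕ) (c : ℝ) (x : ℝ) : ℝ :=
  ∑ k ∈ Finset.range N, x ^ k / (c ^ k * k.factorial)

noncomputable def mgG (N : ℕ) (c : ℝ) (x : ℝ) : ℝ :=
  1 - Real.exp (-x / c) * mgS N c x

noncomputable def mgd (N : ℕ) (c : ℝ) (x : ℝ) : ℝ :=
  x ^ (N - 1) * Real.exp (-x / c) / ((N - 1).factorial * c ^ N)

lemma mgd_cont (N : ℕ) (c : ℝ) : Continuous (mgd N c) := by
  unfold mgd; fun_prop

lemma mgd_nonneg (N : ℕ) {c : ℝ} (hc : 0 < c) {x : ℝ} (hx : 0 ≤ x) : 0 ≤ mgd N c x := by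
  unfold mgd
  positivity

lemma mgG_zero {N : ℕ} (hN : 0 < N) (c : ℝ) : mgG N c 0 = 0 := by
  unfold mgG mgS
  rw [Finset.sum_eq_single 0]
  · simp
  · intro k _ hk
    simp [zero_pow hk]
  · intro h; exact absurd (Finset.mem_range.2 hN) h

lemma mgG_hasDeriv {N : ℕ} (hN : 0 < N) {c : ℝ} (hc : 0 < c) (x : ℝ) :
    HasDerivAt (mgG N c) (mgd N c x) x := by
  obtain ⟨m, rfl⟩ : ∃ m, N = m + 1 := ⟨N - 1, (Nat.succ_pred_eq_of_pos hN).symm⟩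
  have hE : HasDerivAt (fun x => Real.exp (-x / c)) (Real.exp (-x / c) * (-1 / c)) x := by
    have h1 : HasDerivAt (fun x : ℝ => -x / c) (-1 / c) x := by
      simpa using ((hasDerivAt_id x).neg.div_const c)
    exact h1.exp
  have hS : HasDerivAt (mgS (m + 1) c)
      (∑ k ∈ Finset.range (m + 1), (k : ℝ) * x ^ (k - 1) / (c ^ k * k.factorial)) x := by
    apply HasDerivAt.fun_sum
    intro k _
    exact (hasDerivAt_pow k x).div_const _
  have h : HasDerivAt (mgG (m + 1) c)
      (0 - (Real.exp (-x / c) * (-1 / c) * mgS (m + 1) c x +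
        Real.exp (-x / c) * ∑ k ∈ Finset.range (m + 1), (k : ℝ) * x ^ (k - 1) / (c ^ k * k.factorial))) x :=
    (hasDerivAt_const x (1 : ℝ)).sub (hE.mul hS)
  convert h using 1
  have hsum : ∑ k ∈ Finset.range (m + 1), (k : ℝ) * x ^ (k - 1) / (c ^ k * k.factorial)
      = (1 / c) * mgS m c x := by
    rw [Finset.sum_range_succ']
    simp only [Nat.cast_zero, zero_mul, zero_div, add_zero]
    unfold mgS
    rw [Finset.mul_sum]
    apply Finset.sum_congr rfl
    intro j _
    have hfac : ((j + 1).factorial : ℝ) = (j + 1) * j.factorial := by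
      rw [Nat.factorial_succ]; push_cast; ring
    have hj1 : ((j : ℝ) + 1) ≠ 0 := by positivity
    have hcn : c ≠ 0 := ne_of_gt hc
    have hjf : (j.factorial : ℝ) ≠ 0 := Nat.cast_ne_zero.2 j.factorial_ne_zero
    simp only [Nat.add_sub_cancel, Nat.cast_add, Nat.cast_one, hfac, pow_succ]
    field_simp
  rw [hsum]
  unfold mgd mgS
  rw [Finset.sum_range_succ]
  simp only [Nat.add_sub_cancel]
  have hcn : c ≠ 0 := ne_of_gt hc
  have hmf : (m.factorial : ℝ) ≠ 0 := Nat.cast_ne_zero.2 m.factorial_ne_zero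
  have hcp : (c : ℝ) ^ m ≠ 0 := pow_ne_zero _ hcn
  field_simp
  ring

lemma mgG_nonneg {N : ℕ} (hN : 0 < N) {c : ℝ} (hc : 0 < c) {x : ℝ} (hx : 0 ≤ x) :
    0 ≤ mgG N c x := by
  have hint : IntervalIntegrable (mgd N c) volume 0 x :=
    (mgd_cont N c).intervalIntegrable 0 x
  have hftc : ∫ t in (0:ℝ)..x, mgd N c t = mgG N c x - mgG N c 0 :=
    intervalIntegral.integral_eq_sub_of_hasDerivAt
      (fun t _ => mgG_hasDeriv hN hc t) hint
  rw [mgG_zero hN, sub_zero] at hftc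
  rw [← hftc]
  apply intervalIntegral.integral_nonneg hx
  intro t ht
  exact mgd_nonneg N hc ht.1

lemma mgG_le_one {N : ℕ} {c : ℝ} (hc : 0 < c) {x : ℝ} (hx : 0 ≤ x) :
    mgG N c x ≤ 1 := by
  unfold mgG
  have h1 : 0 ≤ Real.exp (-x / c) * mgS N c x := by
    apply mul_nonneg (Real.exp_nonneg _)
    unfold mgS
    apply Finset.sum_nonneg
    intro k _
    positivity
  linarith

/-- Measure of `Iic x` for a withDensity measure with indicator density. -/
lemma meas_Iic_eq {f F : ℝ → ℝ} (hf : Continuous f)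
    (hf0 : ∀ t ∈ Set.Ioi (0:ℝ), 0 ≤ f t)
    (hd : ∀ t, HasDerivAt F (f t) t) (hF0 : F 0 = 0) {x : ℝ} (hx : 0 ≤ x) :
    ((volume : Measure ℝ).withDensity fun t =>
      ENNReal.ofReal ((Set.Ioi (0:ℝ)).indicator f t)) (Set.Iic x)
    = ENNReal.ofReal (F x) := by
  rw [withDensity_apply _ measurableSet_Iic]
  have h1 : ∀ t : ℝ, ENNReal.ofReal ((Set.Ioi (0:ℝ)).indicator f t)
      = (Set.Ioi (0:ℝ)).indicator (fun t => ENNReal.ofReal (f t)) t := by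
    intro t
    by_cases ht : t ∈ Set.Ioi (0:ℝ) <;> simp [ht]
  simp only [h1]
  rw [lintegral_indicator measurableSet_Ioi, Measure.restrict_restrict measurableSet_Ioi,
    Set.Ioi_inter_Iic]
  have hInt : IntegrableOn f (Set.Ioc 0 x) volume :=
    (hf.integrableOn_Ioc)
  rw [← ofReal_integral_eq_lintegral_ofReal hInt]
  · congr 1
    rw [← intervalIntegral.integral_of_le hx]
    rw [intervalIntegral.integral_eq_sub_of_hasDerivAt (fun t _ => hd t)
      (hf.intervalIntegrable 0 x), hF0, sub_zero]
  · filter_upwards [ae_restrict_mem measurableSet_Ioc] with t ht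
    exact hf0 t ht.1

lemma meas_Iic_zero {f : ℝ → ℝ} {x : ℝ} (hx : x < 0) :
    ((volume : Measure ℝ).withDensity fun t =>
      ENNReal.ofReal ((Set.Ioi (0:ℝ)).indicator f t)) (Set.Iic x) = 0 := by
  rw [withDensity_apply _ measurableSet_Iic]
  have h1 : ∀ t : ℝ, ENNReal.ofReal ((Set.Ioi (0:ℝ)).indicator f t)
      = (Set.Ioi (0:ℝ)).indicator (fun t => ENNReal.ofReal (f t)) t := by
    intro t
    by_cases ht : t ∈ Set.Ioi (0:ℝ) <;> simp [ht]
  simp only [h1]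
  rw [lintegral_indicator measurableSet_Ioi, Measure.restrict_restrict measurableSet_Ioi,
    Set.Ioi_inter_Iic, Set.Ioc_eq_empty (by linarith)]
  simp

lemma density_eq (Nn Nf : ℕ) (hNn : 0 < Nn) (hNf : 0 < Nf)
    {Ωn Ωf : ℝ} (hΩn : 0 < Ωn) (hΩf : 0 < Ωf)
    {Ω : ℝ} (hΩ : Ω = Ωn * Ωf / (Ωn + Ωf)) (t : ℝ) :
    t ^ (Nn - 1) * Real.exp (-t / Ωn) / ((Nn - 1).factorial * Ωn ^ Nn)
      + t ^ (Nf - 1) * Real.exp (-t / Ωf) / ((Nf - 1).factorial * Ωf ^ Nf)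
      - Real.exp (-t / Ω) * ∑ l ∈ Finset.range Nf,
          t ^ (Nn + l - 1) / ((Nn - 1).factorial * Ωn ^ Nn * Ωf ^ l * l.factorial)
      - Real.exp (-t / Ω) * ∑ ℓ ∈ Finset.range Nn,
          t ^ (Nf + ℓ - 1) / ((Nf - 1).factorial * Ωf ^ Nf * Ωn ^ ℓ * ℓ.factorial)
    = mgd Nn Ωn t * mgG Nf Ωf t + mgd Nf Ωf t * mgG Nn Ωn t := by
  have hexp : Real.exp (-t / Ωn) * Real.exp (-t / Ωf) = Real.exp (-t / Ω) := by
    rw [← Real.exp_add]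
    congr 1
    rw [hΩ]
    have h1 : Ωn ≠ 0 := ne_of_gt hΩn
    have h2 : Ωf ≠ 0 := ne_of_gt hΩf
    have h3 : Ωn + Ωf ≠ 0 := by positivity
    field_simp
    ring
  have key : ∀ (N M : ℕ), 0 < N → ∀ c c' : ℝ, c ≠ 0 → c' ≠ 0 →
      Real.exp (-t/c) * Real.exp (-t/c') = Real.exp (-t/Ω) →
      Real.exp (-t / Ω) * ∑ l ∈ Finset.range M,
          t ^ (N + l - 1) / ((N - 1).factorial * c ^ N * c' ^ l * l.factorial)
      = mgd N c t * (Real.exp (-t / c') * mgS M c' t) := by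
    intro N M hN c c' hc hc' hec
    unfold mgd mgS
    rw [Finset.mul_sum, Finset.mul_sum, Finset.mul_sum]
    apply Finset.sum_congr rfl
    intro l _
    have hpow : N + l - 1 = (N - 1) + l := by omega
    rw [hpow, pow_add, ← hec]
    have hlf : (l.factorial : ℝ) ≠ 0 := Nat.cast_ne_zero.2 l.factorial_ne_zero
    have hNf : ((N-1).factorial : ℝ) ≠ 0 := Nat.cast_ne_zero.2 (N-1).factorial_ne_zero
    have hcN : c ^ N ≠ 0 := pow_ne_zero _ hc
    have hcl : c' ^ l ≠ 0 := pow_ne_zero _ hc'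
    field_simp
  have hn := key Nn Nf hNn Ωn Ωf (ne_of_gt hΩn) (ne_of_gt hΩf) hexp
  have hf := key Nf Nn hNf Ωf Ωn (ne_of_gt hΩf) (ne_of_gt hΩn) (by rw [mul_comm] at hexp; exact hexp)
  rw [hn, hf]
  unfold mgG mgd
  ring

/-- Density of the maximum of independent Gamma(N_n, Ω_n) and Gamma(N_f, Ω_f)
random variables (integer shapes, scale parametrization). -/
theorem max_gamma_density {Ωs : Type*} [MeasureSpace Ωs]
    [IsProbabilityMeasure (ℙ : Measure Ωs)]
    (Nn Nf : ℕ) (hNn : 0 < Nn) (hNf : 0 < Nf)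
    (Ωn Ωf : ℝ) (hΩn : 0 < Ωn) (hΩf : 0 < Ωf)
    (Ω : ℝ) (hΩ : Ω = Ωn * Ωf / (Ωn + Ωf))
    (gn gf : Ωs → ℝ) (hgn : Measurable gn) (hgf : Measurable gf)
    (hindep : IndepFun gn gf ℙ)
    (hlawn : (ℙ : Measure Ωs).map gn
      = (volume : Measure ℝ).withDensity fun x =>
          ENNReal.ofReal ((Set.Ioi (0:ℝ)).indicator
            (fun t => t ^ (Nn - 1) * Real.exp (-t / Ωn) / ((Nn - 1).factorial * Ωn ^ Nn)) x))
    (hlawf : (ℙ : Measure Ωs).map gf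
      = (volume : Measure ℝ).withDensity fun x =>
          ENNReal.ofReal ((Set.Ioi (0:ℝ)).indicator
            (fun t => t ^ (Nf - 1) * Real.exp (-t / Ωf) / ((Nf - 1).factorial * Ωf ^ Nf)) x)) :
    (ℙ : Measure Ωs).map (fun ω => max (gn ω) (gf ω))
      = (volume : Measure ℝ).withDensity fun x =>
          ENNReal.ofReal ((Set.Ioi (0:ℝ)).indicator
            (fun t =>
              t ^ (Nn - 1) * Real.exp (-t / Ωn) / ((Nn - 1).factorial * Ωn ^ Nn)
              + t ^ (Nf - 1) * Real.exp (-t / Ωf) / ((Nf - 1).factorial * Ωf ^ Nf)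
              - Real.exp (-t / Ω) * ∑ l ∈ Finset.range Nf,
                  t ^ (Nn + l - 1) / ((Nn - 1).factorial * Ωn ^ Nn * Ωf ^ l * l.factorial)
              - Real.exp (-t / Ω) * ∑ ℓ ∈ Finset.range Nn,
                  t ^ (Nf + ℓ - 1) / ((Nf - 1).factorial * Ωf ^ Nf * Ωn ^ ℓ * ℓ.factorial)) x) := by
  have hmax : Measurable fun ω => max (gn ω) (gf ω) := hgn.max hgf
  haveI : IsProbabilityMeasure ((ℙ : Measure Ωs).map (fun ω => max (gn ω) (gf ω))) :=
    Measure.isProbabilityMeasure_map hmax.aemeasurable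
  set bigf : ℝ → ℝ := fun t =>
      t ^ (Nn - 1) * Real.exp (-t / Ωn) / ((Nn - 1).factorial * Ωn ^ Nn)
      + t ^ (Nf - 1) * Real.exp (-t / Ωf) / ((Nf - 1).factorial * Ωf ^ Nf)
      - Real.exp (-t / Ω) * ∑ l ∈ Finset.range Nf,
          t ^ (Nn + l - 1) / ((Nn - 1).factorial * Ωn ^ Nn * Ωf ^ l * l.factorial)
      - Real.exp (-t / Ω) * ∑ ℓ ∈ Finset.range Nn,
          t ^ (Nf + ℓ - 1) / ((Nf - 1).factorial * Ωf ^ Nf * Ωn ^ ℓ * ℓ.factorial) with hbigf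
  have hbig_eq : ∀ t, bigf t = mgd Nn Ωn t * mgG Nf Ωf t + mgd Nf Ωf t * mgG Nn Ωn t :=
    fun t => density_eq Nn Nf hNn hNf hΩn hΩf hΩ t
  have hbig_cont : Continuous bigf := by
    rw [hbigf]
    apply Continuous.sub
    apply Continuous.sub
    · fun_prop
    · exact Continuous.mul (by fun_prop) (continuous_finset_sum _ fun l _ => by fun_prop)
    · exact Continuous.mul (by fun_prop) (continuous_finset_sum _ fun l _ => by fun_prop)
  have hbig_nonneg : ∀ t ∈ Set.Ioi (0:ℝ), 0 ≤ bigf t := by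
    intro t ht
    rw [hbig_eq]
    have ht' : (0:ℝ) ≤ t := le_of_lt ht
    exact add_nonneg
      (mul_nonneg (mgd_nonneg _ hΩn ht') (mgG_nonneg hNf hΩf ht'))
      (mul_nonneg (mgd_nonneg _ hΩf ht') (mgG_nonneg hNn hΩn ht'))
  have hbig_deriv : ∀ t, HasDerivAt (fun x => mgG Nn Ωn x * mgG Nf Ωf x) (bigf t) t := by
    intro t
    have h := (mgG_hasDeriv hNn hΩn t).mul (mgG_hasDeriv hNf hΩf t)
    refine h.congr_deriv ?_
    rw [hbig_eq]
    ring
  refine Measure.ext_of_Iic _ _ (fun x => ?_)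
  have hpre : (fun ω => max (gn ω) (gf ω)) ⁻¹' Set.Iic x
      = gn ⁻¹' Set.Iic x ∩ gf ⁻¹' Set.Iic x := by
    ext ω; simp [max_le_iff]
  rw [Measure.map_apply hmax measurableSet_Iic, hpre,
    hindep.measure_inter_preimage_eq_mul _ _ measurableSet_Iic measurableSet_Iic,
    ← Measure.map_apply hgn measurableSet_Iic, ← Measure.map_apply hgf measurableSet_Iic,
    hlawn, hlawf]
  rcases lt_or_ge x 0 with hx | hx
  · rw [meas_Iic_zero hx, meas_Iic_zero hx, meas_Iic_zero hx, zero_mul]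
  · have h1 := meas_Iic_eq (f := mgd Nn Ωn) (F := mgG Nn Ωn) (mgd_cont Nn Ωn)
      (fun t ht => mgd_nonneg _ hΩn (le_of_lt ht)) (mgG_hasDeriv hNn hΩn)
      (mgG_zero hNn Ωn) hx
    have h2 := meas_Iic_eq (f := mgd Nf Ωf) (F := mgG Nf Ωf) (mgd_cont Nf Ωf)
      (fun t ht => mgd_nonneg _ hΩf (le_of_lt ht)) (mgG_hasDeriv hNf hΩf)
      (mgG_zero hNf Ωf) hx
    have h3 := meas_Iic_eq (f := bigf) (F := fun x => mgG Nn Ωn x * mgG Nf Ωf x)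
      hbig_cont hbig_nonneg hbig_deriv (by show mgG Nn Ωn 0 * mgG Nf Ωf 0 = 0; rw [mgG_zero hNn, zero_mul]) hx
    rw [show (fun t => t ^ (Nn - 1) * Real.exp (-t / Ωn) / ((Nn - 1).factorial * Ωn ^ Nn))
        = mgd Nn Ωn from rfl,
      show (fun t => t ^ (Nf - 1) * Real.exp (-t / Ωf) / ((Nf - 1).factorial * Ωf ^ Nf))
        = mgd Nf Ωf from rfl, h1, h2, h3,
      ← ENNReal.ofReal_mul (mgG_nonneg hNn hΩn hx)]
end

section
/- Let N_n, N_f be positive integers and Ω_n, Ω_f > 0, and set Ω = Ω_n Ω_f / (Ω_n + Ω_f). Let g_n and g_f be independent random variables with g_n Gamma-distributed with shape N_n and scale Ω_n, and g_f Gamma-distributed with shape N_f and scale Ω_f. Then g_w = min{g_n, g_f} has law with probability density (with respect to Lebesgue measure on (0,∞)) given for x > 0 by f_{g_w}(x) = e^{-x/Ω} ∑_{l=0}^{N_f-1} x^{N_n+l-1} / ((N_n-1)! Ω_n^{N_n} Ω_f^l l!) + e^{-x/Ω} ∑_{ℓ=0}^{N_n-1} x^{N_f+ℓ-1} / ((N_f-1)!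 Ω_f^{N_f} Ω_n^ℓ ℓ!). -/
open Real MeasureTheory ProbabilityTheory Set Filter Topology

noncomputable def Spoly (N : ℕ) (Ωp : ℝ) (t : ℝ) : ℝ :=
  Real.exp (-t / Ωp) * ∑ k ∈ Finset.range N, t ^ k / (Ωp ^ k * k.factorial)

noncomputable def gpdf (N : ℕ) (Ωp : ℝ) (t : ℝ) : ℝ :=
  t ^ (N - 1) * Real.exp (-t / Ωp) / ((N - 1).factorial * Ωp ^ N)

lemma Spoly_zero {N : ℕ} (hN : 0 < N) (Ωp : ℝ) : Spoly N Ωp 0 = 1 := by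
  unfold Spoly
  rw [Finset.sum_eq_single 0]
  · simp
  · intro k hk hk0
    simp [zero_pow hk0]
  · intro h; exact absurd (Finset.mem_range.2 hN) h

lemma Spoly_nonneg {N : ℕ} {Ωp t : ℝ} (hΩ : 0 < Ωp) (ht : 0 ≤ t) : 0 ≤ Spoly N Ωp t := by
  unfold Spoly
  apply mul_nonneg (Real.exp_nonneg _)
  apply Finset.sum_nonneg
  intro k _
  positivity

lemma gpdf_nonneg {N : ℕ} {Ωp t : ℝ} (hΩ : 0 < Ωp) (ht : 0 ≤ t) : 0 ≤ gpdf N Ωp t := by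
  unfold gpdf; positivity

lemma hasDerivAt_Spoly {N : ℕ} (hN : 0 < N) {Ωp : ℝ} (hΩ : 0 < Ωp) (t : ℝ) :
    HasDerivAt (Spoly N Ωp) (-(gpdf N Ωp t)) t := by
  induction N with
  | zero => exact absurd hN (lt_irrefl 0)
  | succ M ih =>
    have hexp : HasDerivAt (fun s : ℝ => Real.exp (-s / Ωp)) (Real.exp (-t / Ωp) * (-1 / Ωp)) t := by
      have h1 : HasDerivAt (fun s : ℝ => -s / Ωp) (-1 / Ωp) t := by
        simpa using ((hasDerivAt_id t).neg.div_const Ωp)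
      exact (Real.hasDerivAt_exp _).comp t h1
    rcases Nat.eq_zero_or_pos M with hM | hM
    · subst hM
      have : HasDerivAt (Spoly 1 Ωp) (Real.exp (-t / Ωp) * (-1 / Ωp)) t := by
        have : Spoly 1 Ωp = fun s => Real.exp (-s / Ωp) := by
          funext s; unfold Spoly; simp
        rw [this]; exact hexp
      convert this using 1
      unfold gpdf
      simp
      ring
    · -- Spoly (M+1) = Spoly M + (fun t => exp (-t/Ωp) * (t^M / (Ωp^M * M!)))
      have hsplit : Spoly (M + 1) Ωp = fun s =>
          Spoly M Ωp s + Real.exp (-s / Ωp) * (s ^ M / (Ωp ^ M * Nat.factorial M)) := by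
        funext s; unfold Spoly
        rw [Finset.sum_range_succ, mul_add]
      rw [hsplit]
      have hpow : HasDerivAt (fun s : ℝ => s ^ M / (Ωp ^ M * Nat.factorial M))
          ((M * t ^ (M - 1)) / (Ωp ^ M * Nat.factorial M)) t :=
        (hasDerivAt_pow M t).div_const _
      have hterm := hexp.mul hpow
      have := (ih hM).add hterm
      convert this using 1
      · rfl
      · rfl
      · rfl
      unfold gpdf
      have hM1 : M - 1 + 1 = M := Nat.succ_pred_eq_of_pos hM
      have hMfac : (Nat.factorial M : ℝ) = M * Nat.factorial (M - 1) := by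
        conv_lhs => rw [← hM1, Nat.factorial_succ]
        push_cast [hM1]
        ring
      have hΩpow : Ωp ^ (M + 1) = Ωp ^ M * Ωp := pow_succ Ωp M
      have htpow : t ^ M = t ^ (M - 1) * t := by
        conv_lhs => rw [← hM1, pow_succ]
      have hfacpos : (0:ℝ) < Nat.factorial (M-1) := by positivity
      have hMpos : (0:ℝ) < (M:ℝ) := by exact_mod_cast hM
      simp only [Nat.add_sub_cancel]
      rw [hΩpow, hMfac, htpow]
      field_simp
      ring

lemma tendsto_Spoly {N : ℕ} {Ωp : ℝ} (hΩ : 0 < Ωp) :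
    Tendsto (Spoly N Ωp) atTop (𝓝 0) := by
  have h : Spoly N Ωp = fun t => ∑ k ∈ Finset.range N,
      ((t / Ωp) ^ k * Real.exp (-(t / Ωp))) * (Ωp ^ k / (Ωp ^ k * Nat.factorial k)) := by
    funext t; unfold Spoly
    rw [Finset.mul_sum]
    refine Finset.sum_congr rfl fun k _ => ?_
    rw [div_pow, neg_div]
    field_simp
  rw [h]
  have : Tendsto (fun t : ℝ => t / Ωp) atTop atTop :=
    tendsto_id.atTop_div_const hΩ
  have hsum : Tendsto (fun t => ∑ k ∈ Finset.range N,
      ((t / Ωp) ^ k * Real.exp (-(t / Ωp))) * (Ωp ^ k / (Ωp ^ k * Nat.factorial k))) atTop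
      (𝓝 (∑ k ∈ Finset.range N, (0:ℝ))) := by
    refine tendsto_finset_sum _ fun k _ => ?_
    have hk := (tendsto_pow_mul_exp_neg_atTop_nhds_zero k).comp this
    have := hk.mul_const (Ωp ^ k / (Ωp ^ k * Nat.factorial k))
    simpa using this
  simpa using hsum

lemma integrableOn_pow_exp {n : ℕ} {b : ℝ} (hb : 0 < b) :
    IntegrableOn (fun t : ℝ => t ^ n * Real.exp (-(b * t))) (Ioi 0) := by
  have h := integrableOn_rpow_mul_exp_neg_mul_rpow (p := 1) (s := n) (b := b)
    (lt_of_lt_of_le neg_one_lt_zero (Nat.cast_nonneg n)) one_pos hb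
  refine h.congr_fun (fun x hx => ?_) measurableSet_Ioi
  dsimp only
  rw [Real.rpow_natCast, Real.rpow_one, neg_mul]

lemma integrableOn_gpdf {N : ℕ} {Ωp a : ℝ} (hΩ : 0 < Ωp) (ha : 0 ≤ a) :
    IntegrableOn (gpdf N Ωp) (Ioi a) := by
  have h : IntegrableOn (fun t : ℝ => t ^ (N-1) * Real.exp (-((1/Ωp) * t))) (Ioi 0) :=
    integrableOn_pow_exp (by positivity)
  have h2 : IntegrableOn (gpdf N Ωp) (Ioi 0) := by
    have h3 : IntegrableOn (fun x : ℝ => 1 / ((Nat.factorial (N-1) : ℝ) * Ωp ^ N) *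
        (x ^ (N-1) * Real.exp (-((1/Ωp) * x)))) (Ioi 0) :=
      h.const_mul _
    refine h3.congr_fun (fun x hx => ?_) measurableSet_Ioi
    unfold gpdf
    rw [neg_div]
    field_simp
  exact h2.mono_set (Ioi_subset_Ioi ha)

lemma survival_gpdf {N : ℕ} (hN : 0 < N) {Ωp a : ℝ} (hΩ : 0 < Ωp) (ha : 0 ≤ a) :
    ∫ t in Ioi a, gpdf N Ωp t = Spoly N Ωp a := by
  have := integral_Ioi_of_hasDerivAt_of_tendsto' (f := fun t => -(Spoly N Ωp t))
    (f' := gpdf N Ωp) (a := a) (m := 0)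
    (fun x _ => by have h := (hasDerivAt_Spoly hN hΩ x).neg; rw [neg_neg] at h; exact h)
    (integrableOn_gpdf hΩ ha)
    (by simpa using (tendsto_Spoly (N := N) hΩ).neg)
  simpa using this

lemma half_identity {Nn : ℕ} (hNn : 0 < Nn) {Ωn Ωf Ω t : ℝ} (hΩn : 0 < Ωn) (hΩf : 0 < Ωf)
    (hΩ : Ω = Ωn * Ωf / (Ωn + Ωf)) (Nf : ℕ) :
    gpdf Nn Ωn t * Spoly Nf Ωf t
      = Real.exp (-t / Ω) * ∑ l ∈ Finset.range Nf,
          t ^ (Nn + l - 1) / ((Nn - 1).factorial * Ωn ^ Nn * Ωf ^ l * l.factorial) := by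
  have hexp : Real.exp (-t / Ωn) * Real.exp (-t / Ωf) = Real.exp (-t / Ω) := by
    rw [← Real.exp_add]; congr 1; rw [hΩ]; field_simp; ring
  unfold gpdf Spoly
  simp only [Finset.mul_sum]
  refine Finset.sum_congr rfl fun l _ => ?_
  have hp : Nn + l - 1 = (Nn - 1) + l := by omega
  rw [hp, pow_add, ← hexp]
  have h1 : (0:ℝ) < Nat.factorial (Nn - 1) := by positivity
  have h2 : (0:ℝ) < Nat.factorial l := by positivity
  field_simp

lemma withDensity_indicator_Iic_zero {x : ℝ} (hx : x ≤ 0) (f : ℝ → ℝ) :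
    ((volume : Measure ℝ).withDensity fun t =>
      ENNReal.ofReal ((Set.Ioi (0:ℝ)).indicator f t)) (Iic x) = 0 := by
  rw [withDensity_apply _ measurableSet_Iic]
  rw [setLIntegral_congr_fun (g := fun _ => (0:ENNReal)) measurableSet_Iic (
    (fun t ht => by
      rw [Set.indicator_of_notMem (by simp only [Set.mem_Ioi, not_lt]; exact le_trans ht hx)]
      simp))]
  simp

lemma withDensity_indicator_Ioi {x : ℝ} (hx : 0 ≤ x) (f : ℝ → ℝ)
    (hint : IntegrableOn f (Ioi x)) (hnn : ∀ t ∈ Ioi x, 0 ≤ f t) :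
    ((volume : Measure ℝ).withDensity fun t =>
      ENNReal.ofReal ((Set.Ioi (0:ℝ)).indicator f t)) (Ioi x)
      = ENNReal.ofReal (∫ t in Ioi x, f t) := by
  rw [withDensity_apply _ measurableSet_Ioi]
  rw [setLIntegral_congr_fun (g := fun t => ENNReal.ofReal (f t)) measurableSet_Ioi (
    (fun t ht => by rw [Set.indicator_of_mem (Set.mem_Ioi.2 (hx.trans_lt ht))]))]
  rw [← ofReal_integral_eq_lintegral_ofReal hint
    ((ae_restrict_iff' measurableSet_Ioi).2 (ae_of_all _ hnn))]

lemma integrableOn_expsum {Ω a : ℝ} (hΩ : 0 < Ω) (ha : 0 ≤ a) (N : ℕ)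
    (m : ℕ → ℕ) (c : ℕ → ℝ) :
    IntegrableOn (fun t : ℝ => Real.exp (-t / Ω) *
      ∑ l ∈ Finset.range N, t ^ (m l) / c l) (Ioi a) := by
  have heq : (fun t : ℝ => Real.exp (-t / Ω) * ∑ l ∈ Finset.range N, t ^ (m l) / c l)
      = fun t => ∑ l ∈ Finset.range N, (1 / c l) * (t ^ (m l) * Real.exp (-((1/Ω) * t))) := by
    funext t
    rw [show -t / Ω = -((1/Ω) * t) by ring, Finset.mul_sum]
    refine Finset.sum_congr rfl fun l _ => ?_
    ring
  rw [heq]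
  refine integrable_finset_sum _ fun l _ => ?_
  have h1 : IntegrableOn (fun t : ℝ => t ^ (m l) * Real.exp (-((1/Ω) * t))) (Ioi 0) :=
    integrableOn_pow_exp (by positivity)
  have h2 : IntegrableOn (fun t : ℝ => (1 / c l) * (t ^ (m l) * Real.exp (-((1/Ω) * t)))) (Ioi 0) :=
    h1.const_mul _
  exact h2.mono_set (Ioi_subset_Ioi ha)

/-- Density of the minimum of independent Gamma(N_n, Ω_n) and Gamma(N_f, Ω_f)
random variables (integer shapes, scale parametrization). -/
theorem min_gamma_density {Ωs : Type*} [MeasureSpace Ωs]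
    [IsProbabilityMeasure (ℙ : Measure Ωs)]
    (Nn Nf : ℕ) (hNn : 0 < Nn) (hNf : 0 < Nf)
    (Ωn Ωf : ℝ) (hΩn : 0 < Ωn) (hΩf : 0 < Ωf)
    (Ω : ℝ) (hΩ : Ω = Ωn * Ωf / (Ωn + Ωf))
    (gn gf : Ωs → ℝ) (hgn : Measurable gn) (hgf : Measurable gf)
    (hindep : IndepFun gn gf ℙ)
    (hlawn : (ℙ : Measure Ωs).map gn
      = (volume : Measure ℝ).withDensity fun x =>
          ENNReal.ofReal ((Set.Ioi (0:ℝ)).indicator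
            (fun t => t ^ (Nn - 1) * Real.exp (-t / Ωn) / ((Nn - 1).factorial * Ωn ^ Nn)) x))
    (hlawf : (ℙ : Measure Ωs).map gf
      = (volume : Measure ℝ).withDensity fun x =>
          ENNReal.ofReal ((Set.Ioi (0:ℝ)).indicator
            (fun t => t ^ (Nf - 1) * Real.exp (-t / Ωf) / ((Nf - 1).factorial * Ωf ^ Nf)) x)) :
    (ℙ : Measure Ωs).map (fun ω => min (gn ω) (gf ω))
      = (volume : Measure ℝ).withDensity fun x =>
          ENNReal.ofReal ((Set.Ioi (0:ℝ)).indicator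
            (fun t =>
              Real.exp (-t / Ω) * ∑ l ∈ Finset.range Nf,
                  t ^ (Nn + l - 1) / ((Nn - 1).factorial * Ωn ^ Nn * Ωf ^ l * l.factorial)
              + Real.exp (-t / Ω) * ∑ ℓ ∈ Finset.range Nn,
                  t ^ (Nf + ℓ - 1) / ((Nf - 1).factorial * Ωf ^ Nf * Ωn ^ ℓ * ℓ.factorial)) x) := by
  have hΩpos : 0 < Ω := by rw [hΩ]; positivity
  set fm : ℝ → ℝ := fun t =>
      Real.exp (-t / Ω) * ∑ l ∈ Finset.range Nf,
          t ^ (Nn + l - 1) / ((Nn - 1).factorial * Ωn ^ Nn * Ωf ^ l * l.factorial)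
      + Real.exp (-t / Ω) * ∑ ℓ ∈ Finset.range Nn,
          t ^ (Nf + ℓ - 1) / ((Nf - 1).factorial * Ωf ^ Nf * Ωn ^ ℓ * ℓ.factorial) with hfm
  -- identity: fm = derivative of -(Sn * Sf)
  have hΩ' : Ω = Ωf * Ωn / (Ωf + Ωn) := by rw [hΩ]; ring_nf
  have hfm_eq : ∀ t, gpdf Nn Ωn t * Spoly Nf Ωf t + Spoly Nn Ωn t * gpdf Nf Ωf t = fm t := by
    intro t
    rw [hfm]
    rw [half_identity hNn hΩn hΩf hΩ Nf]
    rw [mul_comm (Spoly Nn Ωn t), half_identity hNf hΩf hΩn hΩ' Nn]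
  have hderiv : ∀ t : ℝ, HasDerivAt (fun s => -(Spoly Nn Ωn s * Spoly Nf Ωf s)) (fm t) t := by
    intro t
    have := ((hasDerivAt_Spoly hNn hΩn t).mul (hasDerivAt_Spoly hNf hΩf t)).neg
    convert this using 1
    · rfl
    · rfl
    · rfl
    rw [← hfm_eq t]; ring
  have hfmint : ∀ a : ℝ, 0 ≤ a → IntegrableOn fm (Ioi a) := by
    intro a ha
    exact (integrableOn_expsum hΩpos ha Nf _ _).add (integrableOn_expsum hΩpos ha Nn _ _)
  have hfmnn : ∀ t : ℝ, 0 ≤ t → 0 ≤ fm t := by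
    intro t ht
    rw [← hfm_eq t]
    have h1 := gpdf_nonneg (N := Nn) hΩn ht
    have h2 := gpdf_nonneg (N := Nf) hΩf ht
    have h3 := Spoly_nonneg (N := Nn) hΩn ht
    have h4 := Spoly_nonneg (N := Nf) hΩf ht
    positivity
  have hFTC : ∀ a : ℝ, 0 ≤ a → ∫ t in Ioi a, fm t = Spoly Nn Ωn a * Spoly Nf Ωf a := by
    intro a ha
    have htend : Tendsto (fun t => -(Spoly Nn Ωn t * Spoly Nf Ωf t)) atTop (𝓝 (-(0*0))) :=
      ((tendsto_Spoly hΩn).mul (tendsto_Spoly hΩf)).neg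
    have := integral_Ioi_of_hasDerivAt_of_tendsto'
      (f := fun s => -(Spoly Nn Ωn s * Spoly Nf Ωf s)) (f' := fm) (a := a)
      (fun t _ => hderiv t) (hfmint a ha) (by simpa using htend)
    simpa using this
  -- survival functions of gn, gf
  have hPn : ∀ x : ℝ, 0 ≤ x → ℙ (gn ⁻¹' Ioi x) = ENNReal.ofReal (Spoly Nn Ωn x) := by
    intro x hx
    rw [← Measure.map_apply hgn measurableSet_Ioi, hlawn]
    rw [show (fun t : ℝ => t ^ (Nn - 1) * Real.exp (-t / Ωn) / ((Nn - 1).factorial * Ωn ^ Nn))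
      = gpdf Nn Ωn from rfl]
    rw [withDensity_indicator_Ioi hx _ (integrableOn_gpdf hΩn hx)
      (fun t ht => gpdf_nonneg hΩn (le_of_lt (hx.trans_lt ht)))]
    rw [survival_gpdf hNn hΩn hx]
  have hPf : ∀ x : ℝ, 0 ≤ x → ℙ (gf ⁻¹' Ioi x) = ENNReal.ofReal (Spoly Nf Ωf x) := by
    intro x hx
    rw [← Measure.map_apply hgf measurableSet_Ioi, hlawf]
    rw [show (fun t : ℝ => t ^ (Nf - 1) * Real.exp (-t / Ωf) / ((Nf - 1).factorial * Ωf ^ Nf))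
      = gpdf Nf Ωf from rfl]
    rw [withDensity_indicator_Ioi hx _ (integrableOn_gpdf hΩf hx)
      (fun t ht => gpdf_nonneg hΩf (le_of_lt (hx.trans_lt ht)))]
    rw [survival_gpdf hNf hΩf hx]
  -- the candidate measure
  set ν : Measure ℝ := (volume : Measure ℝ).withDensity fun x =>
      ENNReal.ofReal ((Set.Ioi (0:ℝ)).indicator fm x) with hν
  have hνIoi : ∀ x : ℝ, 0 ≤ x → ν (Ioi x) = ENNReal.ofReal (Spoly Nn Ωn x * Spoly Nf Ωf x) := by
    intro x hx
    rw [hν, withDensity_indicator_Ioi hx fm (hfmint x hx)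
      (fun t ht => hfmnn t (le_of_lt (hx.trans_lt ht))), hFTC x hx]
  have hνuniv : ν Set.univ = 1 := by
    rw [← Set.Iic_union_Ioi (a := (0:ℝ)),
      measure_union (Set.Iic_disjoint_Ioi le_rfl) measurableSet_Ioi,
      withDensity_indicator_Iic_zero le_rfl fm, hνIoi 0 le_rfl,
      Spoly_zero hNn, Spoly_zero hNf]
    norm_num
  have hmin : Measurable fun ω => min (gn ω) (gf ω) := hgn.min hgf
  haveI : IsProbabilityMeasure ((ℙ : Measure Ωs).map (fun ω => min (gn ω) (gf ω))) :=
    Measure.isProbabilityMeasure_map hmin.aemeasurable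
  refine MeasureTheory.Measure.ext_of_Iic _ _ (fun x => ?_)
  rw [Measure.map_apply hmin measurableSet_Iic]
  rcases lt_or_ge x 0 with hx | hx
  · -- x < 0 : both sides zero
    have h1 : ℙ (gn ⁻¹' Iic x) = 0 := by
      rw [← Measure.map_apply hgn measurableSet_Iic, hlawn,
        withDensity_indicator_Iic_zero hx.le]
    have h2 : ℙ (gf ⁻¹' Iic x) = 0 := by
      rw [← Measure.map_apply hgf measurableSet_Iic, hlawf,
        withDensity_indicator_Iic_zero hx.le]
    have hsub : (fun ω => min (gn ω) (gf ω)) ⁻¹' Iic x ⊆ gn ⁻¹' Iic x ∪ gf ⁻¹' Iic x := by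
      intro ω hω
      have hω' : min (gn ω) (gf ω) ≤ x := hω
      rcases min_le_iff.1 hω' with h | h
      · exact Or.inl h
      · exact Or.inr h
    rw [measure_mono_null hsub (measure_union_null h1 h2),
      withDensity_indicator_Iic_zero hx.le]
  · -- 0 ≤ x
    have hset : (fun ω => min (gn ω) (gf ω)) ⁻¹' Iic x
        = (gn ⁻¹' Ioi x ∩ gf ⁻¹' Ioi x)ᶜ := by
      ext ω
      simp only [Set.mem_preimage, Set.mem_Iic, Set.mem_compl_iff, Set.mem_inter_iff,
        Set.mem_Ioi, min_le_iff, not_and_or, not_lt]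
    have hInd := hindep.measure_inter_preimage_eq_mul (Ioi x) (Ioi x)
      measurableSet_Ioi measurableSet_Ioi
    rw [hset, measure_compl ((hgn measurableSet_Ioi).inter (hgf measurableSet_Ioi))
      (measure_ne_top _ _), measure_univ, hInd, hPn x hx, hPf x hx,
      ← ENNReal.ofReal_mul (Spoly_nonneg hΩn hx)]
    have hcompl : ν (Iic x) = ν Set.univ - ν (Ioi x) := by
      rw [show Iic x = (Ioi x)ᶜ by simp]
      exact measure_compl measurableSet_Ioi (by rw [hνIoi x hx]; exact ENNReal.ofReal_ne_top)
    rw [hcompl, hνuniv, hνIoi x hx]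
end

section
/- Let N_n, N_f be positive integers and Ω_n, Ω_f, Ω_p > 0, and set Ω = Ω_n Ω_f / (Ω_n + Ω_f). Let f_{g_s} denote the density of the maximum of independent Gamma(N_n, Ω_n) and Gamma(N_f, Ω_f) random variables, i.e., f_{g_s}(u) = u^{N_n-1} e^{-u/Ω_n}/((N_n-1)! Ω_n^{N_n}) + u^{N_f-1} e^{-u/Ω_f}/((N_f-1)! Ω_f^{N_f}) − e^{-u/Ω} ∑_{l=0}^{N_f-1} u^{N_n+l-1}/((N_n-1)! Ω_n^{N_n} Ω_f^l l!) − e^{-u/Ω} ∑_{ℓ=0}^{N_n-1} u^{N_f+ℓ-1}/((N_f-1)! Ω_f^{N_f} Ω_n^ℓ ℓ!). Then for every x > 0, ∫₀^∞ y f_{g_s}(xy) (e^{-y/Ω_p}/Ω_p) dy = (N_n x^{N_n-1}/(Ω_n^{N_n} Ω_p)) (x/Ω_n + 1/Ω_p)^{-(N_n+1)} + (N_f x^{N_f-1}/(Ω_f^{N_f} Ω_p)) (x/Ω_f + 1/Ω_p)^{-(N_f+1)} − ∑_{l=0}^{N_f-1} ( (N_n+l)! x^{N_n+l-1} / ((N_n-1)!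 Ω_n^{N_n} Ω_p l! Ω_f^l) ) (x/Ω + 1/Ω_p)^{-(N_n+l+1)} − ∑_{ℓ=0}^{N_n-1} ( (N_f+ℓ)! x^{N_f+ℓ-1} / ((N_f-1)! Ω_f^{N_f} Ω_p ℓ! Ω_n^ℓ) ) (x/Ω + 1/Ω_p)^{-(N_f+ℓ+1)}. -/
open Real MeasureTheory

lemma aux_integrable (n : ℕ) {a : ℝ} (ha : 0 < a) :
    IntegrableOn (fun y : ℝ => y ^ n * Real.exp (-(a * y))) (Set.Ioi 0) := by
  have h := integrableOn_rpow_mul_exp_neg_mul_rpow (s := (n : ℝ)) (p := 1)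
    (by exact lt_of_lt_of_le (by norm_num) (Nat.cast_nonneg n)) one_pos ha
  have he : (fun y : ℝ => y ^ (n : ℝ) * Real.exp (-a * y ^ (1:ℝ)))
      = fun y : ℝ => y ^ n * Real.exp (-(a * y)) := by
    ext y; rw [Real.rpow_one, Real.rpow_natCast, neg_mul]
  rwa [he] at h

lemma aux_integral (n : ℕ) {a : ℝ} (ha : 0 < a) :
    ∫ y in Set.Ioi (0:ℝ), y ^ n * Real.exp (-(a * y)) = n.factorial / a ^ (n + 1) := by
  calc ∫ y in Set.Ioi (0:ℝ), y ^ n * Real.exp (-(a * y))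
      = ∫ y in Set.Ioi (0:ℝ), y ^ ((n : ℝ) + 1 - 1) * Real.exp (-(a * y)) := by
        refine setIntegral_congr_fun measurableSet_Ioi (fun y _ => ?_)
        rw [show (n:ℝ) + 1 - 1 = (n:ℝ) by ring, Real.rpow_natCast]
    _ = (1/a) ^ ((n:ℝ) + 1) * Real.Gamma ((n:ℝ) + 1) :=
        Real.integral_rpow_mul_exp_neg_mul_Ioi (by positivity) ha
    _ = n.factorial / a ^ (n + 1) := by
        rw [Real.Gamma_nat_eq_factorial,
          show ((n:ℝ) + 1) = ((n + 1 : ℕ) : ℝ) by push_cast; ring,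
          Real.rpow_natCast, one_div, inv_pow]
        ring

lemma aux_zpow (b : ℝ) (j : ℕ) : b ^ (-((j:ℤ) + 1)) = (b ^ (j + 1))⁻¹ := by
  rw [zpow_neg]; norm_cast

lemma aux_zpow2 (b : ℝ) (i j : ℕ) :
    b ^ (-((i:ℤ) + (j:ℤ) + 1)) = (b ^ (i + j + 1))⁻¹ := by
  rw [zpow_neg]; norm_cast

/-- The ratio-density integral for the strong user: `∫₀^∞ y f_{g_s}(xy) f_{g_p}(y) dy`
has the stated closed form, where `f_{g_s}` is the density of the maximum of
independent Gamma(N_n, Ω_n) and Gamma(N_f, Ω_f) random variables and `g_p` is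
exponential with mean `Ω_p`. -/
theorem strong_user_ratio_density_integral (Nn Nf : ℕ) (hNn : 0 < Nn) (hNf : 0 < Nf)
    (Ωn Ωf Ωp : ℝ) (hΩn : 0 < Ωn) (hΩf : 0 < Ωf) (hΩp : 0 < Ωp)
    (Ω : ℝ) (hΩ : Ω = Ωn * Ωf / (Ωn + Ωf))
    (fgs : ℝ → ℝ)
    (hfgs : ∀ u : ℝ, fgs u
      = u ^ (Nn - 1) * Real.exp (-u / Ωn) / ((Nn - 1).factorial * Ωn ^ Nn)
        + u ^ (Nf - 1) * Real.exp (-u / Ωf) / ((Nf - 1).factorial * Ωf ^ Nf)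
        - Real.exp (-u / Ω) * ∑ l ∈ Finset.range Nf,
            u ^ (Nn + l - 1) / ((Nn - 1).factorial * Ωn ^ Nn * Ωf ^ l * l.factorial)
        - Real.exp (-u / Ω) * ∑ ℓ ∈ Finset.range Nn,
            u ^ (Nf + ℓ - 1) / ((Nf - 1).factorial * Ωf ^ Nf * Ωn ^ ℓ * ℓ.factorial))
    (x : ℝ) (hx : 0 < x) :
    ∫ y in Set.Ioi (0:ℝ), y * fgs (x * y) * (Real.exp (-y / Ωp) / Ωp)
      = Nn * x ^ (Nn - 1) / (Ωn ^ Nn * Ωp) * (x / Ωn + 1 / Ωp) ^ (-(Nn + 1 : ℤ))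
        + Nf * x ^ (Nf - 1) / (Ωf ^ Nf * Ωp) * (x / Ωf + 1 / Ωp) ^ (-(Nf + 1 : ℤ))
        - ∑ l ∈ Finset.range Nf,
            ((Nn + l).factorial * x ^ (Nn + l - 1)
              / ((Nn - 1).factorial * Ωn ^ Nn * Ωp * l.factorial * Ωf ^ l))
            * (x / Ω + 1 / Ωp) ^ (-(Nn + l + 1 : ℤ))
        - ∑ ℓ ∈ Finset.range Nn,
            ((Nf + ℓ).factorial * x ^ (Nf + ℓ - 1)
              / ((Nf - 1).factorial * Ωf ^ Nf * Ωp * ℓ.factorial * Ωn ^ ℓ))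
            * (x / Ω + 1 / Ωp) ^ (-(Nf + ℓ + 1 : ℤ)) := by
  obtain ⟨m, rfl⟩ := Nat.exists_eq_succ_of_ne_zero hNn.ne'
  obtain ⟨k, rfl⟩ := Nat.exists_eq_succ_of_ne_zero hNf.ne'
  simp only [Nat.succ_eq_add_one] at hfgs ⊢
  have hΩ0 : 0 < Ω := by rw [hΩ]; positivity
  have hΩn0 : Ωn ≠ 0 := hΩn.ne'
  have hΩf0 : Ωf ≠ 0 := hΩf.ne'
  have hΩp0 : Ωp ≠ 0 := hΩp.ne'
  have hΩ0' : Ω ≠ 0 := hΩ0.ne'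
  set a1 : ℝ := x / Ωn + 1 / Ωp with ha1def
  set a2 : ℝ := x / Ωf + 1 / Ωp with ha2def
  set c : ℝ := x / Ω + 1 / Ωp with hcdef
  have ha1 : 0 < a1 := add_pos (div_pos hx hΩn) (div_pos one_pos hΩp)
  have ha2 : 0 < a2 := add_pos (div_pos hx hΩf) (div_pos one_pos hΩp)
  have hc : 0 < c := add_pos (div_pos hx hΩ0) (div_pos one_pos hΩp)
  have hm1 : ∀ l : ℕ, m + 1 + l - 1 = m + l := fun l => by omega
  have hk1 : ∀ l : ℕ, k + 1 + l - 1 = k + l := fun l => by omega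
  have hpt : ∀ y : ℝ, y * fgs (x * y) * (Real.exp (-y / Ωp) / Ωp)
      = (x ^ m / ((m.factorial : ℝ) * Ωn ^ (m + 1) * Ωp))
          * (y ^ (m + 1) * Real.exp (-(a1 * y)))
      + (x ^ k / ((k.factorial : ℝ) * Ωf ^ (k + 1) * Ωp))
          * (y ^ (k + 1) * Real.exp (-(a2 * y)))
      - ∑ l ∈ Finset.range (k + 1),
          (x ^ (m + l) / ((m.factorial : ℝ) * Ωn ^ (m + 1) * Ωf ^ l * l.factorial * Ωp))
            * (y ^ (m + l + 1) * Real.exp (-(c * y)))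
      - ∑ l ∈ Finset.range (m + 1),
          (x ^ (k + l) / ((k.factorial : ℝ) * Ωf ^ (k + 1) * Ωn ^ l * l.factorial * Ωp))
            * (y ^ (k + l + 1) * Real.exp (-(c * y))) := by
    intro y
    have ea1 : Real.exp (-(a1 * y)) = Real.exp (-(x * y) / Ωn) * Real.exp (-y / Ωp) := by
      rw [← Real.exp_add]; congr 1; rw [ha1def]; field_simp; ring
    have ea2 : Real.exp (-(a2 * y)) = Real.exp (-(x * y) / Ωf) * Real.exp (-y / Ωp) := by
      rw [← Real.exp_add]; congr 1; rw [ha2def]; field_simp; ring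
    have ec : Real.exp (-(c * y)) = Real.exp (-(x * y) / Ω) * Real.exp (-y / Ωp) := by
      rw [← Real.exp_add]; congr 1; rw [hcdef]; field_simp; ring
    rw [hfgs]
    simp only [Nat.add_sub_cancel, hm1, hk1]
    rw [show ∀ A B S1 S2 w : ℝ, y * (A + B - S1 - S2) * w
        = y * A * w + y * B * w - y * S1 * w - y * S2 * w from fun _ _ _ _ _ => by ring]
    simp only [Finset.mul_sum, Finset.sum_mul]
    congr 1
    · congr 1
      · congr 1
        · rw [ea1, mul_pow]; ring
        · rw [ea2, mul_pow]; ring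
      · refine Finset.sum_congr rfl fun l _ => ?_
        rw [ec, mul_pow]; ring
    · refine Finset.sum_congr rfl fun l _ => ?_
      rw [ec, mul_pow]; ring
  simp only [hpt]
  have i1 : Integrable (fun y : ℝ => (x ^ m / ((m.factorial : ℝ) * Ωn ^ (m + 1) * Ωp))
      * (y ^ (m + 1) * Real.exp (-(a1 * y)))) (volume.restrict (Set.Ioi 0)) :=
    (aux_integrable (m + 1) ha1).const_mul _
  have i2 : Integrable (fun y : ℝ => (x ^ k / ((k.factorial : ℝ) * Ωf ^ (k + 1) * Ωp))
      * (y ^ (k + 1) * Real.exp (-(a2 * y)))) (volume.restrict (Set.Ioi 0)) :=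
    (aux_integrable (k + 1) ha2).const_mul _
  have iS1 : Integrable (fun y : ℝ => ∑ l ∈ Finset.range (k + 1),
      (x ^ (m + l) / ((m.factorial : ℝ) * Ωn ^ (m + 1) * Ωf ^ l * l.factorial * Ωp))
        * (y ^ (m + l + 1) * Real.exp (-(c * y)))) (volume.restrict (Set.Ioi 0)) :=
    integrable_finset_sum _ fun l _ => (aux_integrable (m + l + 1) hc).const_mul _
  have iS2 : Integrable (fun y : ℝ => ∑ l ∈ Finset.range (m + 1),
      (x ^ (k + l) / ((k.factorial : ℝ) * Ωf ^ (k + 1) * Ωn ^ l * l.factorial * Ωp))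
        * (y ^ (k + l + 1) * Real.exp (-(c * y)))) (volume.restrict (Set.Ioi 0)) :=
    integrable_finset_sum _ fun l _ => (aux_integrable (k + l + 1) hc).const_mul _
  have iB : Integrable (fun y : ℝ =>
      (x ^ m / ((m.factorial : ℝ) * Ωn ^ (m + 1) * Ωp)) * (y ^ (m + 1) * Real.exp (-(a1 * y)))
      + (x ^ k / ((k.factorial : ℝ) * Ωf ^ (k + 1) * Ωp)) * (y ^ (k + 1) * Real.exp (-(a2 * y))))
      (volume.restrict (Set.Ioi 0)) := i1.add i2
  have iC : Integrable (fun y : ℝ =>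
      (x ^ m / ((m.factorial : ℝ) * Ωn ^ (m + 1) * Ωp)) * (y ^ (m + 1) * Real.exp (-(a1 * y)))
      + (x ^ k / ((k.factorial : ℝ) * Ωf ^ (k + 1) * Ωp)) * (y ^ (k + 1) * Real.exp (-(a2 * y)))
      - ∑ l ∈ Finset.range (k + 1),
          (x ^ (m + l) / ((m.factorial : ℝ) * Ωn ^ (m + 1) * Ωf ^ l * l.factorial * Ωp))
            * (y ^ (m + l + 1) * Real.exp (-(c * y))))
      (volume.restrict (Set.Ioi 0)) := iB.sub iS1
  rw [integral_sub iC iS2, integral_sub iB iS1,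
    integral_add i1 i2,
    integral_finset_sum _ fun l _ => ((aux_integrable (m + l + 1) hc).const_mul _ : Integrable _ _),
    integral_finset_sum _ fun l _ => ((aux_integrable (k + l + 1) hc).const_mul _ : Integrable _ _)]
  simp only [integral_const_mul]
  have hva1 : ∀ n : ℕ, ∫ y in Set.Ioi (0:ℝ), y ^ n * Real.exp (-(a1 * y))
      = n.factorial / a1 ^ (n + 1) := fun n => aux_integral n ha1
  have hva2 : ∀ n : ℕ, ∫ y in Set.Ioi (0:ℝ), y ^ n * Real.exp (-(a2 * y))
      = n.factorial / a2 ^ (n + 1) := fun n => aux_integral n ha2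
  have hvc : ∀ n : ℕ, ∫ y in Set.Ioi (0:ℝ), y ^ n * Real.exp (-(c * y))
      = n.factorial / c ^ (n + 1) := fun n => aux_integral n hc
  simp only [hva1, hva2, hvc]
  have hmf : (m.factorial : ℝ) ≠ 0 := Nat.cast_ne_zero.mpr m.factorial_ne_zero
  have hkf : (k.factorial : ℝ) ≠ 0 := Nat.cast_ne_zero.mpr k.factorial_ne_zero
  have ha1' : a1 ≠ 0 := ha1.ne'
  have ha2' : a2 ≠ 0 := ha2.ne'
  have hc' : c ≠ 0 := hc.ne'
  congr 1
  · congr 1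
    · congr 1
      · rw [aux_zpow a1 (m + 1)]
        simp only [Nat.add_sub_cancel, Nat.factorial_succ]
        push_cast
        field_simp
      · rw [aux_zpow a2 (k + 1)]
        simp only [Nat.add_sub_cancel, Nat.factorial_succ]
        push_cast
        field_simp
    · refine Finset.sum_congr rfl fun l _ => ?_
      rw [aux_zpow2 c (m + 1) l]
      simp only [hm1, Nat.add_sub_cancel,
        show m + 1 + l = m + l + 1 from by omega]
      have hlf : (l.factorial : ℝ) ≠ 0 := Nat.cast_ne_zero.mpr l.factorial_ne_zero
      field_simp
  · refine Finset.sum_congr rfl fun l _ => ?_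
    rw [aux_zpow2 c (k + 1) l]
    simp only [hk1, Nat.add_sub_cancel,
      show k + 1 + l = k + l + 1 from by omega]
    have hlf : (l.factorial : ℝ) ≠ 0 := Nat.cast_ne_zero.mpr l.factorial_ne_zero
    field_simp
end
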